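/- arXiv:math/0610752 — 3 statements merged into one kernel-verified Lean document; each statement's English description precedes it below -/
import Mathlib

section
/- The ring C[x, x^{-1}, y, y^{-1}] of Laurent polynomials in two variables is integral over its subring C[x + x^{-1}, y + y^{-1}, xy + (xy)^{-1}]. -/
/-!
A unit `u` with `u + u⁻¹` in a subring `A` is integral over `A`, being a root of
`X² - (u + u⁻¹) X + 1`. This applies to `x`, `x⁻¹`, `y`, `y⁻¹`; since these generate the Laurent
polynomial ring and the integral closure of `A` is a subring, the whole ring is integral over `A`.
-/

open LaurentPolynomial

/-- The Laurent polynomial ring `ℂ[x,x⁻¹,y,y⁻¹]`, realized as Laurent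
polynomials in `y` over Laurent polynomials in `x`. -/
abbrev TwoLaurent : Type := LaurentPolynomial (LaurentPolynomial ℂ)

noncomputable def Lx : TwoLaurent := LaurentPolynomial.C (LaurentPolynomial.T 1)
noncomputable def Lxinv : TwoLaurent := LaurentPolynomial.C (LaurentPolynomial.T (-1))
noncomputable def Ly : TwoLaurent := LaurentPolynomial.T 1
noncomputable def Lyinv : TwoLaurent := LaurentPolynomial.T (-1)

theorem isIntegral_of_mul_eq_one_of_algebraMap_eq_add {R S : Type*} [CommRing R] [CommRing S]
    [Algebra R S] {u v : S} (r : R) (huv : u * v = 1) (hr : algebraMap R S r = u + v) :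
    IsIntegral R u :=
  ⟨Polynomial.X ^ 2 - Polynomial.C r * Polynomial.X + 1, by monicity!, by
    simp only [Polynomial.eval₂_add, Polynomial.eval₂_sub, Polynomial.eval₂_pow,
      Polynomial.eval₂_mul, Polynomial.eval₂_X, Polynomial.eval₂_C, Polynomial.eval₂_one, hr]
    linear_combination -huv⟩

namespace LaurentPolynomial

variable {R : Type*} [Semiring R]

theorem T_mul_T_neg (n : ℤ) : (T n * T (-n) : R[T;T⁻¹]) = 1 := by
  rw [← T_add, add_neg_cancel, T_zero]

theorem T_mem_of_T_one_mem {S : Type*} [SetLike S R[T;T⁻¹]] [SubmonoidClass S R[T;T⁻¹]] {s : S}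
    (h₁ : T 1 ∈ s) (h₂ : T (-1) ∈ s) (n : ℤ) : T n ∈ s := by
  induction n using Int.induction_on with
  | zero => simpa only [T_zero] using one_mem s
  | succ k ih => simpa only [T_add] using mul_mem ih h₁
  | pred k ih => simpa only [sub_eq_add_neg, T_add] using mul_mem ih h₂

theorem mem_of_C_mem_of_T_mem (s : Subsemiring R[T;T⁻¹]) (hC : ∀ r, C r ∈ s)
    (h₁ : T 1 ∈ s) (h₂ : T (-1) ∈ s) (f : R[T;T⁻¹]) : f ∈ s := by
  induction f using LaurentPolynomial.induction_on' with
  | add p q hp hq => exact add_mem hp hq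
  | C_mul_T n r => exact mul_mem (hC r) (T_mem_of_T_one_mem h₁ h₂ n)

end LaurentPolynomial

/-- `ℂ[x,x⁻¹,y,y⁻¹]` is integral over the subring
`ℂ[x+x⁻¹, y+y⁻¹, xy+(xy)⁻¹]`. -/
theorem laurent_integral_over_trace_subring :
    ∀ f : TwoLaurent,
      IsIntegral
        (Algebra.adjoin ℂ
          ({Lx + Lxinv, Ly + Lyinv, Lx * Ly + Lxinv * Lyinv} : Set TwoLaurent)) f := by
  set A := Algebra.adjoin ℂ
      ({Lx + Lxinv, Ly + Lyinv, Lx * Ly + Lxinv * Lyinv} : Set TwoLaurent)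
  set S := (integralClosure A TwoLaurent).toSubsemiring
  have mem_of_mul_eq_one_of_add_mem {u v : TwoLaurent} (huv : u * v = 1) (h : u + v ∈ A) :
      u ∈ S ∧ v ∈ S :=
    ⟨isIntegral_of_mul_eq_one_of_algebraMap_eq_add ⟨u + v, h⟩ huv rfl,
      isIntegral_of_mul_eq_one_of_algebraMap_eq_add ⟨u + v, h⟩ (by rwa [mul_comm])
        (add_comm u v)⟩
  obtain ⟨hx, hxinv⟩ := mem_of_mul_eq_one_of_add_mem (u := Lx) (v := Lxinv)
    (by rw [Lx, Lxinv, ← map_mul, T_mul_T_neg, map_one]) (Algebra.subset_adjoin (by simp))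
  obtain ⟨hy, hyinv⟩ := mem_of_mul_eq_one_of_add_mem (u := Ly) (v := Lyinv)
    (T_mul_T_neg 1) (Algebra.subset_adjoin (by simp))
  have hC : ∀ p : ℂ[T;T⁻¹], C p ∈ S := by
    refine mem_of_C_mem_of_T_mem (S.comap C) (fun a => ?_) hx hxinv
    exact (integralClosure A TwoLaurent).algebraMap_mem (algebraMap ℂ A a)
  exact mem_of_C_mem_of_T_mem S hC hy hyinv
end

section
/- For every solution (x, y, z) in C^3 of the equation x^2 + y^2 + z^2 - xyz - 4 = 0, there exist nonzero complex numbers m and l with x = m + m^{-1}, y = l + l^{-1}, and z = ml + m^{-1}l^{-1}. -/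
/-- every solution of `x² + y² + z² - xyz - 4 = 0` in `ℂ³` arises
as `(m + m⁻¹, l + l⁻¹, ml + m⁻¹l⁻¹)` for some nonzero `m, l`. -/
theorem markov_solution_comes_from_torus (x y z : ℂ)
    (h : x ^ 2 + y ^ 2 + z ^ 2 - x * y * z - 4 = 0) :
    ∃ m l : ℂ, m ≠ 0 ∧ l ≠ 0 ∧
      x = m + m⁻¹ ∧ y = l + l⁻¹ ∧ z = m * l + m⁻¹ * l⁻¹ := by
  obtain ⟨s, hs⟩ := IsAlgClosed.exists_pow_nat_eq (x ^ 2 - 4) (n := 2) (by norm_num)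
  obtain ⟨t, ht⟩ := IsAlgClosed.exists_pow_nat_eq (y ^ 2 - 4) (n := 2) (by norm_num)
  set m : ℂ := (x + s) / 2 with hm_def
  set l : ℂ := (y + t) / 2 with hl_def
  have hm1 : m * ((x - s) / 2) = 1 := by
    rw [hm_def]; linear_combination (-1/4 : ℂ) * hs
  have hl1 : l * ((y - t) / 2) = 1 := by
    rw [hl_def]; linear_combination (-1/4 : ℂ) * ht
  have hm0 : m ≠ 0 := left_ne_zero_of_mul_eq_one hm1
  have hl0 : l ≠ 0 := left_ne_zero_of_mul_eq_one hl1
  have hmi : m⁻¹ = (x - s) / 2 := inv_eq_of_mul_eq_one_right hm1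
  have hli : l⁻¹ = (y - t) / 2 := inv_eq_of_mul_eq_one_right hl1
  have hx : x = m + m⁻¹ := by rw [hmi, hm_def]; ring
  have hy : y = l + l⁻¹ := by rw [hli, hl_def]; ring
  have key : (z - (m * l + m⁻¹ * l⁻¹)) * (z - (m * l⁻¹ + m⁻¹ * l)) = 0 := by
    rw [hmi, hli, hm_def, hl_def]
    linear_combination h - (t ^ 2 / 4) * hs - ((x ^ 2 - 4) / 4) * ht
  rcases mul_eq_zero.mp key with hk | hk
  · exact ⟨m, l, hm0, hl0, hx, hy, sub_eq_zero.mp hk⟩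
  · exact ⟨m, l⁻¹, hm0, inv_ne_zero hl0, hx, by rw [inv_inv, add_comm]; exact hy,
      by rw [inv_inv]; exact sub_eq_zero.mp hk⟩
end

section
/- The projective plane cubic curve defined by F(X, Y, Z) = YZ^2 - Y^2Z - X^2Z + 2X^2Y - Y^3 = 0 in CP^2 is smooth: the only common zero in C^3 of the three partial derivatives ∂F/∂X, ∂F/∂Y, ∂F/∂Z is (0, 0, 0). -/
/-- the projective cubic `YZ² - Y²Z - X²Z + 2X²Y - Y³ = 0` is
smooth: the only common zero in `ℂ³` of the three partial derivatives
`∂F/∂X = -2XZ + 4XY`, `∂F/∂Y = Z² - 2YZ + 2X² - 3Y²`, `∂F/∂Z = 2YZ - Y² - X²`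
is the origin. -/
theorem figure_eight_projective_model_smooth (X Y Z : ℂ)
    (h1 : -2 * X * Z + 4 * X * Y = 0)
    (h2 : Z ^ 2 - 2 * Y * Z + 2 * X ^ 2 - 3 * Y ^ 2 = 0)
    (h3 : 2 * Y * Z - Y ^ 2 - X ^ 2 = 0) :
    X = 0 ∧ Y = 0 ∧ Z = 0 := by
  have hx : X * (2 * Y - Z) = 0 := by linear_combination h1 / 2
  rcases mul_eq_zero.mp hx with hX | hZ
  · -- X = 0
    have hy : Y * (2 * Z - Y) = 0 := by linear_combination h3 + X * hX
    rcases mul_eq_zero.mp hy with hY | hYZ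
    · have hz : Z ^ 2 = 0 := by
        linear_combination h2 + 2 * Z * hY + 3 * Y * hY - 2 * X * hX
      exact ⟨hX, hY, pow_eq_zero_iff (by norm_num) |>.mp hz⟩
    · -- Y = 2Z
      have hY2 : Y = 2 * Z := by linear_combination -hYZ
      have hz : Z ^ 2 = 0 := by
        have := h2
        rw [hY2] at this
        linear_combination (-this + 2 * X * hX) / 15
      have hZ0 : Z = 0 := pow_eq_zero_iff (by norm_num) |>.mp hz
      exact ⟨hX, by rw [hY2, hZ0, mul_zero], hZ0⟩
  · -- Z = 2Y
    have hZ2 : Z = 2 * Y := by linear_combination -hZ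
    have hy : Y ^ 2 = 0 := by
      -- from h3: 3Y² = X²; from h2: 3Y² = 2X² ⇒ X² = 0 and Y² = 0
      have e3 : 3 * Y ^ 2 - X ^ 2 = 0 := by rw [hZ2] at h3; linear_combination h3
      have e2 : 2 * X ^ 2 - 3 * Y ^ 2 = 0 := by rw [hZ2] at h2; linear_combination h2
      linear_combination (2 * e3 + e2) / 3
    have hY0 : Y = 0 := pow_eq_zero_iff (by norm_num) |>.mp hy
    have hx2 : X ^ 2 = 0 := by
      rw [hZ2, hY0] at h3; linear_combination -h3
    exact ⟨pow_eq_zero_iff (by norm_num) |>.mp hx2, hY0, by rw [hZ2, hY0, mul_zero]⟩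
end
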